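/- arXiv:2012.02396 — 2 statements merged into one kernel-verified Lean document; each statement's English description precedes it below -/
import Mathlib

section
/- Every meager-additive subset of the Cantor group ℕ → ZMod 2 has strong measure zero (with respect to the standard metric on the Cantor space). -/
open Pointwise

-- The standard metric on the Cantor group `ℕ → ZMod 2`:
-- `dist x y = (1/2)^n` where `n` is the least index at which `x` and `y` differ.
attribute [local instance] PiNat.metricSpace

/-- A subset `X` of a topological additive group `Y` is meager-additive if
`X + M` is meager for every meager set `M ⊆ Y`. -/
def IsMeagerAdditive {Y : Type*} [TopologicalSpace Y] [AddGroup Y] (X : Set Y) : Prop :=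
  ∀ M : Set Y, IsMeagre M → IsMeagre (X + M)

/-- A subset `X` of a metric space `Y` has strong measure zero if for every sequence
`(ε n)` of positive reals there is a sequence `(U n)` of subsets of `Y` with
`diam (U n) ≤ ε n` for every `n` whose union covers `X`. -/
def HasStrongMeasureZero {Y : Type*} [MetricSpace Y] (X : Set Y) : Prop :=
  ∀ ε : ℕ → ℝ, (∀ n, 0 < ε n) →
    ∃ U : ℕ → Set Y, (∀ n, EMetric.diam (U n) ≤ ENNReal.ofReal (ε n)) ∧ X ⊆ ⋃ n, U n

/-!
Given `ε`, choose `f L` so large that `(1/2)^(f L) ≤ ε m` for every index `m` coding a word of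
length `L`. The points vanishing on no interval `[L, f L)` form a meager set `M`, so some `y`
lies outside `X + M`, i.e. every `x ∈ X` agrees with `y` on an interval `[L, f L)`. Such an `x`
lies in the set indexed by the code of its prefix of length `L` whose points agree with `y` on
`[L, f L)`; any two of them agree below `f L`, so it has diameter at most `(1/2)^(f L)`.
-/

open Set Filter Topology

section

variable {E : Type*} [TopologicalSpace E]

theorem dense_setOf_exists_eqOn_Ico (c : ℕ → E) (f : ℕ → ℕ) :
    Dense {z : ℕ → E | ∃ L, EqOn z c (Ico L (f L))} := by
  intro x
  let z : ℕ → ℕ → E := fun L => (Finset.Ico L (f L)).piecewise c x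
  have hz : Tendsto z atTop (𝓝 x) := by
    refine tendsto_pi_nhds.2 fun i => tendsto_const_nhds.congr' ?_
    filter_upwards [eventually_gt_atTop i] with L hL
    simp [z, hL.not_ge]
  refine mem_closure_of_tendsto hz (Eventually.of_forall fun L => ⟨L, fun i hi => ?_⟩)
  simp [z, mem_Ico.1 hi]

theorem isOpen_setOf_exists_eqOn_Ico [DiscreteTopology E] (c : ℕ → E) (f : ℕ → ℕ) :
    IsOpen {z : ℕ → E | ∃ L, EqOn z c (Ico L (f L))} := by
  simp only [EqOn, ofPred_exists, ofPred_forall]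
  exact isOpen_iUnion fun L => (finite_Ico L (f L)).isOpen_biInter fun i _ =>
    (isOpen_discrete {c i}).preimage (continuous_apply i : Continuous fun z : ℕ → E => z i)

theorem setOf_exists_eqOn_Ico_mem_residual [DiscreteTopology E] (c : ℕ → E) (f : ℕ → ℕ) :
    {z : ℕ → E | ∃ L, EqOn z c (Ico L (f L))} ∈ residual (ℕ → E) :=
  residual_of_dense_open (isOpen_setOf_exists_eqOn_Ico c f) (dense_setOf_exists_eqOn_Ico c f)

end

theorem IsMeagerAdditive.exists_forall_eqOn_Ico {E : Type*} [TopologicalSpace E]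
    [DiscreteTopology E] [AddGroup E] [BaireSpace (ℕ → E)] {X : Set (ℕ → E)}
    (hX : IsMeagerAdditive X) (f : ℕ → ℕ) :
    ∃ y : ℕ → E, ∀ x ∈ X, ∃ L, EqOn x y (Ico L (f L)) := by
  set G := {z : ℕ → E | ∃ L, EqOn z 0 (Ico L (f L))}
  have hGc : IsMeagre Gᶜ := by
    simpa [IsMeagre] using setOf_exists_eqOn_Ico_mem_residual (0 : ℕ → E) f
  obtain ⟨y, hy⟩ := (dense_of_mem_residual (hX _ hGc)).nonempty
  refine ⟨y, fun x hx => ?_⟩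
  obtain ⟨L, hL⟩ : -x + y ∈ G := by
    by_contra h
    exact hy ⟨x, hx, -x + y, h, add_neg_cancel_left x y⟩
  exact ⟨L, fun i hi => neg_add_eq_zero.1 (hL hi)⟩

theorem hasStrongMeasureZero_of_forall_exists_eqOn_Ico {E : Type*} [TopologicalSpace E]
    [DiscreteTopology E] [Finite E] {X : Set (ℕ → E)}
    (hX : ∀ f : ℕ → ℕ, ∃ y : ℕ → E, ∀ x ∈ X, ∃ L, EqOn x y (Ico L (f L))) :
    HasStrongMeasureZero X := by
  intro ε hε
  obtain ⟨code, hcode⟩ := Countable.exists_injective_nat (Σ L, Fin L → E)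
  have hN : ∀ L, ∃ N, ∀ s : Fin L → E, ((1 : ℝ) / 2) ^ N ≤ ε (code ⟨L, s⟩) := fun L =>
    (eventually_all.2 fun s => (tendsto_pow_atTop_nhds_zero_of_lt_one (by norm_num)
      (by norm_num)).eventually (ge_mem_nhds (hε (code ⟨L, s⟩)))).exists
  choose f hf using hN
  obtain ⟨y, hy⟩ := hX f
  refine ⟨fun m => {x | ∃ L, code ⟨L, fun i => x i⟩ = m ∧ EqOn x y (Ico L (f L))},
    fun m => Metric.ediam_le ?_, fun x hx => ?_⟩
  · rintro x ⟨L, rfl, hxy⟩ x' ⟨L', hm, hx'y⟩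
    obtain ⟨rfl, hpre⟩ := Sigma.mk.inj_iff.1 (hcode hm).symm
    have hcyl : x' ∈ PiNat.cylinder x (f L) := fun i hi => by
      rcases lt_or_ge i L with h | h
      · exact (congrFun (eq_of_heq hpre) ⟨i, h⟩).symm
      · rw [hxy ⟨h, hi⟩, hx'y ⟨h, hi⟩]
    rw [edist_dist, dist_comm]
    exact ENNReal.ofReal_le_ofReal ((PiNat.mem_cylinder_iff_dist_le.1 hcyl).trans (hf L _))
  · obtain ⟨L, hL⟩ := hy x hx
    exact mem_iUnion.2 ⟨_, L, rfl, hL⟩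

/-- Every meager-additive subset of the Cantor group `ℕ → ZMod 2` has strong measure
zero with respect to the standard metric on the Cantor space. -/
theorem hasStrongMeasureZero_of_isMeagerAdditive_cantorGroup (X : Set (ℕ → ZMod 2))
    (hX : IsMeagerAdditive X) : HasStrongMeasureZero X :=
  hasStrongMeasureZero_of_forall_exists_eqOn_Ico hX.exists_forall_eqOn_Ico
end

section
/- Let C be the Cantor space ℕ → Bool with its standard metric, and let π : ℕ → ℕ be a partition of ℕ into finite sets (i.e., every fiber π⁻¹{n} is finite). Then every π-supernull subset of C has sharp measure zero. -/
/-!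
Given radii `ε j`, choose lengths `ℓ j > j` with `2 ^ (-ℓ j) ≤ ε j`. For each `n`, the finite
unions `⋃ i < r, [s i]_{ℓ ⟨n, i⟩}` of cylinders form an ω-cover of the Cantor space: a
diagonal point escapes each of them. Supernullity selects one such union `U n` for every `n`;
listing the cylinders of all the `U n` through `Nat.pair` and indexing those of `U n` by `π n`
gives a cover by sets of diameter at most `ε` whose index map has finite fibers, because each
`U n` consists of finitely many cylinders and `π` has finite fibers.
-/

-- The Cantor space `ℕ → Bool` carries the metric `dist x y = (1/2)^n`, where `n` is the
-- least index at which `x` and `y` differ; it induces the product topology.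
attribute [local instance] PiNat.metricSpace

/-- An ω-cover of a topological space `Y` is a family `A` of open subsets of `Y`
such that `Y` itself is not an element of `A` and every finite subset of `Y` is
contained in a single element of `A`. -/
def IsOmegaCover {Y : Type*} [TopologicalSpace Y] (A : Set (Set Y)) : Prop :=
  (∀ U ∈ A, IsOpen U) ∧ Set.univ ∉ A ∧
    ∀ F : Set Y, F.Finite → ∃ U ∈ A, F ⊆ U

/-- Given a partition `π : ℕ → ℕ` into finite sets, a subset `X` of a topological
space `Y` is `π`-supernull if for every sequence `(A n)` of ω-covers of `Y` there is
an infinite collection of open sets `{U n}` with `U n ∈ A n` for every `n`, such that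
every element of `X` belongs to `⋃ {U k : π k = n}` for all but finitely many `n`. -/
def IsPiSupernull {Y : Type*} [TopologicalSpace Y] (π : ℕ → ℕ) (X : Set Y) : Prop :=
  ∀ A : ℕ → Set (Set Y), (∀ n, IsOmegaCover (A n)) →
    ∃ U : ℕ → Set Y, (∀ n, U n ∈ A n) ∧ (Set.range U).Infinite ∧
      ∀ x ∈ X, ∀ᶠ n in Filter.atTop, x ∈ ⋃ k ∈ π ⁻¹' {n}, U k

/-- A subset `X` of a metric space `Y` has sharp measure zero if for every sequence
`(ε n)` of positive reals there are a sequence `(U n)` of subsets of `Y` with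
`diam (U n) ≤ ε n` for every `n` whose union covers `X`, together with a map
`ρ : ℕ → ℕ` with finite fibers such that every `x ∈ X` belongs to
`⋃ {U k : ρ k = m}` for all but finitely many `m`. -/
def HasSharpMeasureZero {Y : Type*} [MetricSpace Y] (X : Set Y) : Prop :=
  ∀ ε : ℕ → ℝ, (∀ n, 0 < ε n) →
    ∃ (U : ℕ → Set Y) (ρ : ℕ → ℕ),
      (∀ n, EMetric.diam (U n) ≤ ENNReal.ofReal (ε n)) ∧ X ⊆ ⋃ n, U n ∧
      (∀ m, (ρ ⁻¹' {m}).Finite) ∧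
      ∀ x ∈ X, ∀ᶠ m in Filter.atTop, x ∈ ⋃ k ∈ ρ ⁻¹' {m}, U k

open Filter PiNat

section Cylinders

variable {E : ℕ → Type*} [∀ n, TopologicalSpace (E n)] [∀ n, DiscreteTopology (E n)]

theorem PiNat.ediam_cylinder_le (x : ∀ n, E n) (n : ℕ) :
    Metric.ediam (cylinder x n) ≤ ENNReal.ofReal ((1 / 2) ^ n) :=
  Metric.ediam_le fun y hy z hz => by
    rw [edist_dist]
    refine ENNReal.ofReal_le_ofReal (mem_cylinder_iff_dist_le.1 ?_)
    rw [mem_cylinder_iff] at hy hz ⊢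
    exact fun i hi => (hy i hi).trans (hz i hi).symm

def cylinderCover (ℓ : ℕ → ℕ) : Set (Set (∀ n, E n)) :=
  {U | ∃ (r : ℕ) (s : ℕ → ∀ n, E n), U = ⋃ i < r, cylinder (s i) (ℓ i)}

theorem isOmegaCover_cylinderCover [∀ n, Nontrivial (E n)] {ℓ : ℕ → ℕ} (hℓ : ∀ i, i < ℓ i) :
    IsOmegaCover (cylinderCover (E := E) ℓ) := by
  refine ⟨?_, ?_, fun F hF => ?_⟩
  · rintro U ⟨r, s, rfl⟩
    exact isOpen_biUnion fun i _ => isOpen_cylinder E _ _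
  · -- a diagonal point differs from the `i`-th center at coordinate `i < ℓ i`
    rintro ⟨r, s, hU⟩
    choose y hy using fun i => exists_ne (s i i)
    obtain ⟨i, -, hi⟩ := Set.mem_iUnion₂.1 (hU ▸ Set.mem_univ y)
    exact hy i (mem_cylinder_iff.1 hi i (hℓ i))
  · let L := hF.toFinset.toList
    refine ⟨_, ⟨L.length, fun i => L.getD i (Classical.arbitrary _), rfl⟩, fun x hx => ?_⟩
    obtain ⟨i, hi, rfl⟩ := List.mem_iff_getElem.1 (by simpa [L] using hx : x ∈ L)
    exact Set.mem_iUnion₂.2 ⟨i, hi, by simp only [List.getD_eq_getElem _ _ hi, self_mem_cylinder]⟩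

end Cylinders

theorem hasSharpMeasureZero_of_fiberwise_finite_covers {Y : Type*} [MetricSpace Y] {X : Set Y}
    {π : ℕ → ℕ} (hπ : ∀ n, (π ⁻¹' {n}).Finite)
    (h : ∀ ε : ℕ → ℝ, (∀ n, 0 < ε n) → ∃ (r : ℕ → ℕ) (W : ℕ → ℕ → Set Y),
      (∀ n, ∀ i < r n, Metric.ediam (W n i) ≤ ENNReal.ofReal (ε (Nat.pair n i))) ∧
      ∀ x ∈ X, ∀ᶠ m in atTop, x ∈ ⋃ n ∈ π ⁻¹' {m}, ⋃ i < r n, W n i) :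
    HasSharpMeasureZero X := by
  intro ε hε
  obtain ⟨r, W, hWdiam, hWX⟩ := h ε hε
  let IsSlot : ℕ → Prop := fun j => j.unpair.2 < r j.unpair.1
  let V : ℕ → Set Y := fun j => if IsSlot j then W j.unpair.1 j.unpair.2 else ∅
  let ρ : ℕ → ℕ := fun j => if IsSlot j then π j.unpair.1 else j
  have hVX : ∀ x ∈ X, ∀ᶠ m in atTop, x ∈ ⋃ k ∈ ρ ⁻¹' {m}, V k := fun x hx =>
    (hWX x hx).mono fun m hm => by
      simp only [Set.mem_iUnion, Set.mem_preimage, Set.mem_singleton_iff] at hm ⊢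
      obtain ⟨n, rfl, i, hi, hxW⟩ := hm
      exact ⟨Nat.pair n i, by simp [ρ, IsSlot, hi], by simpa [V, IsSlot, hi] using hxW⟩
  refine ⟨V, ρ, fun j => ?_, fun x hx => ?_, fun m => ?_, hVX⟩
  · dsimp only [V]
    split_ifs with hj
    · have := hWdiam _ _ hj
      rwa [Nat.pair_unpair] at this
    · exact Metric.ediam_empty.trans_le bot_le
  · obtain ⟨m, hm⟩ := (hVX x hx).exists
    exact Set.iUnion₂_subset_iUnion _ _ hm
  · refine (((hπ m).biUnion fun n _ => (Set.finite_Iio (r n)).image (Nat.pair n)).insert m).subset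
      fun j hj => ?_
    by_cases hj' : IsSlot j
    · simp only [Set.mem_preimage, Set.mem_singleton_iff, ρ, if_pos hj'] at hj
      exact Or.inr (Set.mem_biUnion hj ⟨_, hj', Nat.pair_unpair j⟩)
    · simp only [Set.mem_preimage, Set.mem_singleton_iff, ρ, if_neg hj'] at hj
      exact Or.inl hj

/-- Every `π`-supernull subset of the Cantor space has sharp measure zero. -/
theorem hasSharpMeasureZero_of_piSupernull (π : ℕ → ℕ) (hπ : ∀ n, (π ⁻¹' {n}).Finite)
    (X : Set (ℕ → Bool)) (hX : IsPiSupernull π X) :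
    HasSharpMeasureZero X := by
  refine hasSharpMeasureZero_of_fiberwise_finite_covers hπ fun ε hε => ?_
  have hℓ (j : ℕ) : ∃ N, j < N ∧ (1 / 2 : ℝ) ^ N ≤ ε j :=
    ((eventually_gt_atTop j).and <| (tendsto_pow_atTop_nhds_zero_of_lt_one (by norm_num)
      (by norm_num)).eventually (ge_mem_nhds (hε j))).exists
  choose ℓ hjℓ hℓε using hℓ
  obtain ⟨U, hUA, -, hUX⟩ := hX (fun n => cylinderCover fun i => ℓ (Nat.pair n i)) fun n =>
    isOmegaCover_cylinderCover fun i => (Nat.right_le_pair n i).trans_lt (hjℓ _)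
  choose r s hs using hUA
  refine ⟨r, fun n i => cylinder (s n i) (ℓ (Nat.pair n i)), fun n i _ => ?_, ?_⟩
  · exact (ediam_cylinder_le _ _).trans (ENNReal.ofReal_le_ofReal (hℓε _))
  · simpa only [hs] using hUX
end
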